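/- Let X be a 2-based Banach space whose natural parameterization r has locally absolutely continuous derivative r', let L be the half-length of S_X, and let ρ, τ : ℝ → ℝ be locally integrable functions such that r''(s) = −ρ(s)·r(s) + τ(s)·r'(s) for almost every s ∈ ℝ and ρ(s) ≥ 0 for almost every s. Then ∫₀^L ρ(s) ds > 0. -/

import Mathlib

noncomputable section
open MeasureTheory Set Filter
open scoped ENNReal Topology

variable {X : Type*} [NormedAddCommGroup X] [NormedSpace ℝ X]

/-- `e^{it} = cos t • e₁ + sin t • e₂` for the basis `b 0, b 1`. -/
def expV (b : Module.Basis (Fin 2) ℝ X) (t : ℝ) : X :=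
  Real.cos t • b 0 + Real.sin t • b 1

/-- The polar parameterization `p(t) = e^{it}/‖e^{it}‖` of the unit sphere. -/
def polarParam (b : Module.Basis (Fin 2) ℝ X) (t : ℝ) : X :=
  ‖expV b t‖⁻¹ • expV b t

/-- The Euclidean norm `|x| = √(e₁*(x)² + e₂*(x)²)` associated to the basis. -/
def euclNorm (b : Module.Basis (Fin 2) ℝ X) (x : X) : ℝ :=
  Real.sqrt ((b.coord 0 x)^2 + (b.coord 1 x)^2)

/-- `c = min{‖x‖ : |x| = 1}`. -/
def cConst (b : Module.Basis (Fin 2) ℝ X) : ℝ :=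
  sInf (norm '' {x : X | euclNorm b x = 1})

/-- `C = max{‖x‖ : |x| = 1}`. -/
def CConst (b : Module.Basis (Fin 2) ℝ X) : ℝ :=
  sSup (norm '' {x : X | euclNorm b x = 1})

/-- The right derivative of a function `f : ℝ → X`. -/
def rightDeriv (f : ℝ → X) (t : ℝ) : X := derivWithin f (Ici t) t

/-- The left derivative of a function `f : ℝ → X`. -/
def leftDeriv (f : ℝ → X) (t : ℝ) : X := derivWithin f (Iic t) t

/-- The arc-length function `s(t) = ∫₀^t ‖p'₊(u)‖ du`. -/
def arcLen (b : Module.Basis (Fin 2) ℝ X) (t : ℝ) : ℝ :=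
  ∫ u in (0:ℝ)..t, ‖rightDeriv (polarParam b) u‖

/-- The half-length `L = s(π)` of the unit sphere. -/
def halfLen (b : Module.Basis (Fin 2) ℝ X) : ℝ := arcLen b Real.pi

/-- The inverse `t = s⁻¹` of the arc-length function. -/
def arcInv (b : Module.Basis (Fin 2) ℝ X) : ℝ → ℝ := Function.invFun (arcLen b)

/-- The natural parameterization `r = p ∘ t` of the unit sphere. -/
def natParam (b : Module.Basis (Fin 2) ℝ X) : ℝ → X := polarParam b ∘ arcInv b

/-- Local absolute continuity of `f` with a.e. derivative `f'`, in the sense that `f` is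
differentiable almost everywhere, `f'` is locally integrable, and `f` is recovered from `f'`
by integration. -/
def LocAC {E : Type*} [NormedAddCommGroup E] [NormedSpace ℝ E] [CompleteSpace E]
    (f f' : ℝ → E) : Prop :=
  (∀ᵐ t : ℝ, HasDerivAt f (f' t) t) ∧ LocallyIntegrable f' volume ∧
    ∀ a b : ℝ, a ≤ b → f b - f a = ∫ t in a..b, f' t

/-- `s` is a Lebesgue point of `g`. -/
def LebesguePoint {E : Type*} [NormedAddCommGroup E] (g : ℝ → E) (s : ℝ) : Prop :=
  Tendsto (fun ε : ℝ => (1/ε) * ∫ t in (0:ℝ)..ε, ‖g (s + t) - g s‖) (𝓝[≠] (0:ℝ)) (𝓝 0)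


/-! If `∫₀^L ρ = 0`, then `ρ = 0` a.e. on `[0, L]` and there `r'' = τ r'`. For every functional `ℓ`
killing `r'(0)`, the scalar function `ℓ ∘ r'` solves the linear Volterra equation
`φ(s) = ∫₀^s τ φ`, so it vanishes by a Grönwall-type argument; hence `ℓ ∘ r` is constant on
`[0, L]`. Since `r(L) = -r(0)`, the whole arc `r([0, L])` lies on the line `ℝ r'(0)` through the
origin, and a continuous path on that line from `r(0)` to `-r(0)` passes through `0`, which is
impossible on the unit sphere. -/

theorem eqOn_zero_of_eq_integral_smul {E : Type*} [NormedAddCommGroup E] [NormedSpace ℝ E]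
    [CompleteSpace E] {φ : ℝ → E} {k : ℝ → ℝ} {a b : ℝ} (hφ : Continuous φ)
    (hk : LocallyIntegrable k volume) (h : ∀ s ∈ Icc a b, φ s = ∫ u in a..s, k u • φ u) :
    EqOn φ 0 (Icc a b) := by
  have hk' : ∀ c d, IntervalIntegrable k volume c d := fun c d =>
    (hk.integrableOn_isCompact isCompact_uIcc).intervalIntegrable
  have hkφ : ∀ c d, IntervalIntegrable (fun u => ‖k u • φ u‖) volume c d := fun c d =>
    ((hk' c d).smul_continuousOn hφ.continuousOn).norm
  set Ψ : ℝ → ℝ := fun x => ∫ u in a..x, ‖k u • φ u‖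
  have hΨ_sub : ∀ x y, Ψ y - Ψ x = ∫ u in x..y, ‖k u • φ u‖ := fun x y =>
    intervalIntegral.integral_interval_sub_left (hkφ a y) (hkφ a x)
  have hΨ_mono : ∀ x y, x ≤ y → Ψ x ≤ Ψ y := fun x y hxy => by
    have := intervalIntegral.integral_nonneg (μ := volume) hxy fun u _ => norm_nonneg (k u • φ u)
    linarith [hΨ_sub x y]
  have hφ_le : ∀ s ∈ Icc a b, ‖φ s‖ ≤ Ψ s := fun s hs => by
    rw [h s hs]; exact intervalIntegral.norm_integral_le_integral_norm hs.1
  -- Just after a zero `x` of `Ψ`, monotonicity gives `Ψ y ≤ (∫ x..y, ‖k‖) * Ψ y`, factor `< 1/2`.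
  have hzero : Icc a b ⊆ Ψ ⁻¹' {0} := by
    refine IsClosed.Icc_subset_of_forall_mem_nhdsWithin ?_ (by simp [Ψ]) ?_
    · exact (isClosed_singleton.preimage (intervalIntegral.continuous_primitive hkφ a)).inter
        isClosed_Icc
    rintro x ⟨hΨx, hxa, hxb⟩
    have hsmall : ∀ᶠ y in 𝓝 x, ∫ u in x..y, ‖k u‖ < 1 / 2 := by
      have := (intervalIntegral.continuous_primitive (fun c d => (hk' c d).norm) x).tendsto x
      simp only [intervalIntegral.integral_same] at this
      exact this.eventually_lt_const (by norm_num)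
    filter_upwards [nhdsWithin_le_nhds hsmall, Ioo_mem_nhdsGT hxb] with y hy hxyb
    have hΨy : Ψ y ≤ (∫ u in x..y, ‖k u‖) * Ψ y := calc
      Ψ y = ∫ u in x..y, ‖k u • φ u‖ := by rw [← hΨ_sub, show Ψ x = 0 from hΨx, sub_zero]
      _ ≤ ∫ u in x..y, ‖k u‖ * Ψ y := by
        refine intervalIntegral.integral_mono_on hxyb.1.le (hkφ x y)
          ((hk' x y).norm.mul_const _) fun u hu => ?_
        rw [norm_smul]
        exact mul_le_mul_of_nonneg_left ((hφ_le u ⟨hxa.trans hu.1, hu.2.trans hxyb.2.le⟩).trans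
          (hΨ_mono u y hu.2)) (norm_nonneg _)
      _ = (∫ u in x..y, ‖k u‖) * Ψ y := intervalIntegral.integral_mul_const _ _
    have hΨy_nonneg : 0 ≤ Ψ y := (show Ψ x = 0 from hΨx) ▸ hΨ_mono x y hxyb.1.le
    show Ψ y = 0
    nlinarith
  intro s hs
  simpa [show Ψ s = 0 from hzero hs] using hφ_le s hs

section LinearODE

variable {E : Type*} [NormedAddCommGroup E] [NormedSpace ℝ E] [CompleteSpace E]

theorem LocAC.eq_add_integral {f f' : ℝ → E} (h : LocAC f f') (a s : ℝ) :
    f s = f a + ∫ u in a..s, f' u := by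
  rcases le_total a s with has | hsa
  · rw [← h.2.2 a s has, add_sub_cancel]
  · rw [intervalIntegral.integral_symm, ← h.2.2 s a hsa]
    abel

theorem LocAC.continuous {f f' : ℝ → E} (h : LocAC f f') : Continuous f := by
  have hprim := (continuous_const (y := f 0)).add <| intervalIntegral.continuous_primitive
    (fun c d => (h.2.1.integrableOn_isCompact isCompact_uIcc).intervalIntegrable) 0
  exact hprim.congr fun s => (h.eq_add_integral 0 s).symm

theorem LocAC.eqOn_zero_of_ae_eq_smul {v w : ℝ → E} (hv : LocAC v w) {τ : ℝ → ℝ}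
    (hτ : LocallyIntegrable τ volume) {a b : ℝ} (hw : ∀ᵐ u, u ∈ Ioc a b → w u = τ u • v u)
    {ℓ : StrongDual ℝ E} (hℓ : ℓ (v a) = 0) : EqOn (ℓ ∘ v) 0 (Icc a b) := by
  refine eqOn_zero_of_eq_integral_smul (ℓ.continuous.comp hv.continuous) hτ fun s hs => ?_
  have hw_int : IntervalIntegrable w volume a s :=
    (hv.2.1.integrableOn_isCompact isCompact_uIcc).intervalIntegrable
  calc (ℓ ∘ v) s = ℓ (v s - v a) := by simp [hℓ]
    _ = ∫ u in a..s, ℓ (w u) := by rw [hv.2.2 a s hs.1, ℓ.intervalIntegral_comp_comm hw_int]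
    _ = ∫ u in a..s, τ u • (ℓ ∘ v) u := by
      refine intervalIntegral.integral_congr_ae (hw.mono fun u hu hus => ?_)
      rw [uIoc_of_le hs.1] at hus
      simp [hu ⟨hus.1, hus.2.trans hs.2⟩]

end LinearODE

section Line

variable {E : Type*} [NormedAddCommGroup E] [NormedSpace ℝ E]

theorem eq_smul_of_forall_dual {v x : E} {f₀ : StrongDual ℝ E} (hf₀ : f₀ v = 1)
    (h : ∀ ℓ : StrongDual ℝ E, ℓ v = 0 → ℓ x = 0) : x = f₀ x • v := by
  refine (SeparatingDual.eq_iff_forall_dual_eq (R := ℝ)).2 fun ℓ => ?_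
  have hx : ℓ x - ℓ v * f₀ x = 0 := by simpa using h (ℓ - ℓ v • f₀) (by simp [hf₀])
  rw [map_smul, smul_eq_mul]
  linarith

theorem exists_eq_zero_of_forall_dual {r : ℝ → E} {a b : ℝ} (hab : a ≤ b)
    (hr : ContinuousOn r (Icc a b)) (hrb : r b = -r a) {v : E}
    (hv : ∀ ℓ : StrongDual ℝ E, ℓ v = 0 → ∀ s ∈ Icc a b, ℓ (r s) = ℓ (r a)) :
    ∃ s ∈ Icc a b, r s = 0 := by
  have hv' : ∀ ℓ : StrongDual ℝ E, ℓ v = 0 → ∀ s ∈ Icc a b, ℓ (r s) = 0 := fun ℓ hℓ s hs => by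
    have hra : ℓ (r a) = 0 := by
      have := hv ℓ hℓ b (right_mem_Icc.2 hab)
      rw [hrb, map_neg] at this
      linarith
    rw [hv ℓ hℓ s hs, hra]
  rcases eq_or_ne v 0 with rfl | hv0
  · exact ⟨a, left_mem_Icc.2 hab, SeparatingDual.eq_zero_of_forall_dual_eq_zero (R := ℝ)
      fun ℓ => hv' ℓ (map_zero ℓ) a (left_mem_Icc.2 hab)⟩
  obtain ⟨g, -, hg⟩ := exists_dual_vector ℝ v (norm_ne_zero_iff.2 hv0)
  set f₀ : StrongDual ℝ E := ‖v‖⁻¹ • g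
  have hf₀ : f₀ v = 1 := by simp [f₀, hg, hv0]
  have h0 : (0 : ℝ) ∈ uIcc (f₀ (r a)) (f₀ (r b)) := by
    rw [hrb, map_neg, mem_uIcc]
    rcases le_total 0 (f₀ (r a)) with h | h
    · exact Or.inr ⟨by linarith, h⟩
    · exact Or.inl ⟨h, by linarith⟩
  rw [← uIcc_of_le hab] at hr ⊢
  obtain ⟨s, hs, hs0⟩ := intermediate_value_uIcc (f₀.continuous.comp_continuousOn hr) h0
  refine ⟨s, hs, ?_⟩
  rw [eq_smul_of_forall_dual hf₀ fun ℓ hℓ => hv' ℓ hℓ s (uIcc_of_le hab ▸ hs)]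
  simp [show f₀ (r s) = 0 from hs0]

end Line

section LipschitzCurve

variable {E : Type*} [NormedAddCommGroup E] [NormedSpace ℝ E] {f : ℝ → E} {K : NNReal}

theorem norm_inv_norm_smul_sub_le {x : E} (hx : x ≠ 0) (y : E) :
    ‖‖x‖⁻¹ • x - ‖y‖⁻¹ • y‖ ≤ 2 * ‖x - y‖ / ‖x‖ := by
  have hx' : 0 < ‖x‖ := norm_pos_iff.2 hx
  have hy : ‖(‖x‖⁻¹ - ‖y‖⁻¹) • y‖ ≤ ‖x - y‖ / ‖x‖ := by
    rcases eq_or_ne y 0 with rfl | hy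
    · simpa using div_nonneg (norm_nonneg x) hx'.le
    have hy' : 0 < ‖y‖ := norm_pos_iff.2 hy
    rw [norm_smul, Real.norm_eq_abs, inv_sub_inv hx'.ne' hy'.ne', abs_div, abs_mul,
      abs_of_pos hx', abs_of_pos hy', abs_sub_comm]
    calc |‖x‖ - ‖y‖| / (‖x‖ * ‖y‖) * ‖y‖ = |‖x‖ - ‖y‖| / ‖x‖ := by field_simp
      _ ≤ ‖x - y‖ / ‖x‖ := by gcongr; exact abs_norm_sub_norm_le x y
  calc ‖‖x‖⁻¹ • x - ‖y‖⁻¹ • y‖ = ‖‖x‖⁻¹ • (x - y) + (‖x‖⁻¹ - ‖y‖⁻¹) • y‖ := by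
        rw [smul_sub, sub_smul]; abel_nf
    _ ≤ ‖x - y‖ / ‖x‖ + ‖x - y‖ / ‖x‖ := by
        refine (norm_add_le _ _).trans (add_le_add ?_ hy)
        rw [norm_smul, norm_inv, norm_norm, inv_mul_eq_div]
    _ = 2 * ‖x - y‖ / ‖x‖ := by ring

theorem LipschitzWith.inv_norm_smul (hf : LipschitzWith K f) {c : NNReal} (hc : 0 < c)
    (hfc : ∀ t, c ≤ ‖f t‖) : LipschitzWith (2 * K / c) fun t => ‖f t‖⁻¹ • f t := by
  refine LipschitzWith.of_dist_le_mul fun t s => ?_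
  have hft : 0 < ‖f t‖ := lt_of_lt_of_le hc (hfc t)
  rw [dist_eq_norm]
  refine (norm_inv_norm_smul_sub_le (norm_pos_iff.1 hft) (f s)).trans ?_
  rw [← dist_eq_norm, NNReal.coe_div, NNReal.coe_mul, NNReal.coe_two, div_le_iff₀ hft]
  calc 2 * dist (f t) (f s) ≤ 2 * (K * dist t s) := by gcongr; exact hf.dist_le_mul t s
    _ = 2 * K / c * dist t s * c := by field_simp
    _ ≤ 2 * K / c * dist t s * ‖f t‖ := by gcongr; exact hfc t

theorem LipschitzWith.intervalIntegrable_deriv [CompleteSpace E] (hf : LipschitzWith K f)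
    (a b : ℝ) : IntervalIntegrable (deriv f) volume a b :=
  (intervalIntegrable_const (c := (K : ℝ))).mono_fun'
    (stronglyMeasurable_deriv f).aestronglyMeasurable
    (ae_of_all _ fun _ => norm_deriv_le_of_lipschitz hf)

variable [FiniteDimensional ℝ E]

theorem LipschitzWith.ae_derivWithin_Ici_eq_deriv (hf : LipschitzWith K f) :
    ∀ᵐ u, derivWithin f (Ici u) u = deriv f u :=
  hf.ae_differentiableAt_real.mono fun u hu => hu.derivWithin (uniqueDiffWithinAt_Ici u)

theorem LipschitzWith.norm_sub_le_integral_norm_deriv (hf : LipschitzWith K f) {a b : ℝ}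
    (hab : a ≤ b) : ‖f b - f a‖ ≤ ∫ u in a..b, ‖deriv f u‖ := by
  have := FiniteDimensional.complete ℝ E
  obtain ⟨ℓ, hℓ, hℓf⟩ := exists_dual_vector'' ℝ (f b - f a)
  have hac : AbsolutelyContinuousOnInterval (ℓ ∘ f) a b :=
    (ℓ.lipschitz.comp hf).lipschitzOnWith.absolutelyContinuousOnInterval
  calc ‖f b - f a‖ = ∫ u in a..b, deriv (ℓ ∘ f) u := by
        simpa [hac.integral_deriv_eq_sub] using hℓf.symm
    _ ≤ ∫ u in a..b, ‖deriv f u‖ := by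
        refine intervalIntegral.integral_mono_ae hab hac.intervalIntegrable_deriv
          (hf.intervalIntegrable_deriv a b).norm ?_
        filter_upwards [hf.ae_differentiableAt_real] with u hu
        rw [(ℓ.hasFDerivAt.comp_hasDerivAt u hu.hasDerivAt).deriv]
        simpa using (le_abs_self _).trans (ℓ.le_of_opNorm_le hℓ (deriv f u))

end LipschitzCurve

section PolarParam

variable (b : Module.Basis (Fin 2) ℝ X)

theorem exists_pos_le_norm_expV : ∃ c : NNReal, 0 < c ∧ ∀ t, c ≤ ‖expV b t‖ := by
  set A : X →L[ℝ] Fin 2 → ℝ := b.equivFunL.toContinuousLinearMap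
  have hA : ∀ t, 1 ≤ 2 * ‖A‖ * ‖expV b t‖ := fun t => by
    have hcoord : ∀ i, |A (expV b t) i| ≤ ‖A‖ * ‖expV b t‖ := fun i =>
      (norm_le_pi_norm (A (expV b t)) i).trans (A.le_opNorm _)
    have hcos : A (expV b t) 0 = Real.cos t := by simp [A, expV]
    have hsin : A (expV b t) 1 = Real.sin t := by simp [A, expV]
    have h0 := hcos ▸ hcoord 0
    have h1 := hsin ▸ hcoord 1
    nlinarith [Real.sin_sq_add_cos_sq t, Real.abs_cos_le_one t, Real.abs_sin_le_one t,
      sq_abs (Real.cos t), sq_abs (Real.sin t), abs_nonneg (Real.cos t), abs_nonneg (Real.sin t)]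
  have hA_pos : 0 < ‖A‖ := by
    by_contra h
    nlinarith [hA 0, norm_nonneg A, norm_nonneg (expV b 0)]
  refine ⟨(2 * ‖A‖₊)⁻¹, inv_pos.2 (mul_pos two_pos hA_pos), fun t => ?_⟩
  push_cast
  rw [inv_le_iff_one_le_mul₀' (mul_pos two_pos hA_pos)]
  exact hA t

theorem expV_ne_zero (t : ℝ) : expV b t ≠ 0 := by
  obtain ⟨c, hc, hle⟩ := exists_pos_le_norm_expV b
  exact norm_pos_iff.1 (lt_of_lt_of_le hc (hle t))

theorem lipschitzWith_expV : LipschitzWith (‖b 0‖₊ + ‖b 1‖₊) (expV b) := by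
  have hderiv : ∀ t, HasDerivAt (expV b) (-Real.sin t • b 0 + Real.cos t • b 1) t := fun t =>
    ((Real.hasDerivAt_cos t).smul_const (b 0)).add ((Real.hasDerivAt_sin t).smul_const (b 1))
  refine lipschitzWith_of_nnnorm_deriv_le (fun t => (hderiv t).differentiableAt) fun t => ?_
  rw [(hderiv t).deriv, ← NNReal.coe_le_coe, coe_nnnorm, NNReal.coe_add, coe_nnnorm, coe_nnnorm]
  refine (norm_add_le _ _).trans (add_le_add ?_ ?_) <;> rw [norm_smul] <;>
    refine mul_le_of_le_one_left (norm_nonneg _) ?_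
  · simpa using Real.abs_sin_le_one t
  · simpa using Real.abs_cos_le_one t

theorem exists_lipschitzWith_polarParam : ∃ K, LipschitzWith K (polarParam b) := by
  obtain ⟨c, hc, hle⟩ := exists_pos_le_norm_expV b
  exact ⟨_, (lipschitzWith_expV b).inv_norm_smul hc hle⟩

theorem norm_polarParam (t : ℝ) : ‖polarParam b t‖ = 1 := by
  rw [polarParam, norm_smul, norm_inv, norm_norm,
    inv_mul_cancel₀ (norm_ne_zero_iff.2 (expV_ne_zero b t))]

theorem polarParam_pi : polarParam b Real.pi = -polarParam b 0 := by
  simp [polarParam, expV]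

theorem norm_polarParam_sub_le_arcLen_sub {t t' : ℝ} (h : t ≤ t') :
    ‖polarParam b t' - polarParam b t‖ ≤ arcLen b t' - arcLen b t := by
  have := b.finiteDimensional_of_finite
  have := FiniteDimensional.complete ℝ X
  obtain ⟨K, hK⟩ := exists_lipschitzWith_polarParam b
  have harcLen : ∀ s, arcLen b s = ∫ u in (0 : ℝ)..s, ‖deriv (polarParam b) u‖ := fun s =>
    intervalIntegral.integral_congr_ae <|
      hK.ae_derivWithin_Ici_eq_deriv.mono fun u hu _ => by rw [rightDeriv, hu]
  rw [harcLen, harcLen, intervalIntegral.integral_interval_sub_left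
    (hK.intervalIntegrable_deriv _ _).norm (hK.intervalIntegrable_deriv _ _).norm]
  exact hK.norm_sub_le_integral_norm_deriv h

theorem polarParam_eq_of_arcLen_eq {t t' : ℝ} (h : arcLen b t = arcLen b t') :
    polarParam b t = polarParam b t' := by
  wlog htt' : t ≤ t' generalizing t t'
  · exact (this h.symm (le_of_not_ge htt')).symm
  have := norm_polarParam_sub_le_arcLen_sub b htt'
  rw [h, sub_self, norm_le_zero_iff, sub_eq_zero] at this
  exact this.symm

/-- `arcInv` is only a `Function.invFun`, so this needs `polarParam_eq_of_arcLen_eq` rather than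
injectivity of `arcLen`. -/
theorem natParam_arcLen (t : ℝ) : natParam b (arcLen b t) = polarParam b t :=
  polarParam_eq_of_arcLen_eq b (Function.invFun_eq ⟨t, rfl⟩)

theorem natParam_halfLen : natParam b (halfLen b) = -natParam b 0 := by
  have h0 := natParam_arcLen b 0
  rw [arcLen, intervalIntegral.integral_same] at h0
  rw [halfLen, natParam_arcLen, polarParam_pi, h0]

theorem halfLen_nonneg : 0 ≤ halfLen b :=
  intervalIntegral.integral_nonneg Real.pi_pos.le fun _ _ => norm_nonneg _

theorem norm_natParam (s : ℝ) : ‖natParam b s‖ = 1 := norm_polarParam b _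

end PolarParam

/-- The integral of the radial curvature over a half-period is strictly positive. -/
theorem integral_radial_curvature_pos [CompleteSpace X] (b : Module.Basis (Fin 2) ℝ X)
    (hdiff : Differentiable ℝ (natParam b))
    (g : ℝ → X) (hac : LocAC (deriv (natParam b)) g)
    (ρ τ : ℝ → ℝ) (hρ : LocallyIntegrable ρ volume) (hτ : LocallyIntegrable τ volume)
    (heq : ∀ᵐ s : ℝ, g s = (-ρ s) • natParam b s + τ s • deriv (natParam b) s)
    (hpos : ∀ᵐ s : ℝ, 0 ≤ ρ s) :
    0 < ∫ s in (0:ℝ)..(halfLen b), ρ s := by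
  set r := natParam b
  set L := halfLen b
  have hL : 0 ≤ L := halfLen_nonneg b
  refine (intervalIntegral.integral_nonneg_of_ae hL hpos).lt_of_ne fun hzero => ?_
  have hρ0 : ∀ᵐ s, s ∈ Ioc 0 L → ρ s = 0 := by
    rw [intervalIntegral.integral_of_le hL, eq_comm, integral_eq_zero_iff_of_nonneg_ae
      (ae_restrict_of_ae hpos) ((hρ.integrableOn_isCompact isCompact_Icc).mono_set
        Ioc_subset_Icc_self)] at hzero
    exact (ae_restrict_iff' measurableSet_Ioc).1 hzero
  have hg : ∀ᵐ s, s ∈ Ioc 0 L → g s = τ s • deriv r s := by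
    filter_upwards [heq, hρ0] with s hs hs0 hsL
    rw [hs, hs0 hsL, neg_zero, zero_smul, zero_add]
  have hline : ∀ ℓ : StrongDual ℝ X, ℓ (deriv r 0) = 0 → ∀ s ∈ Icc 0 L, ℓ (r s) = ℓ (r 0) :=
    fun ℓ hℓ => constant_of_has_deriv_right_zero (ℓ.continuous.comp hdiff.continuous).continuousOn
      fun s hs => by
        have hℓr' : ℓ (deriv r s) = 0 :=
          hac.eqOn_zero_of_ae_eq_smul hτ hg hℓ (Ico_subset_Icc_self hs)
        exact hℓr' ▸ (ℓ.hasFDerivAt.comp_hasDerivAt s (hdiff s).hasDerivAt).hasDerivWithinAt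
  obtain ⟨s, -, hs⟩ :=
    exists_eq_zero_of_forall_dual hL hdiff.continuous.continuousOn (natParam_halfLen b) hline
  simpa [r, hs] using norm_natParam b s

end
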